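/- The t-hull number of any prime graph with at least two vertices is exactly two. -/

import Mathlib

open Set

variable {V : Type*}

/-- `p` is a triangle path: a path with no edge joining vertices at index
distance greater than 2 along the path. -/
def TPath (G : SimpleGraph V) {u v : V} (p : G.Walk u v) : Prop :=
  p.IsPath ∧ ∀ i j : ℕ, i + 2 < j →
    ∀ (hi : i < p.support.length) (hj : j < p.support.length),
      ¬ G.Adj (p.support.get ⟨i, hi⟩) (p.support.get ⟨j, hj⟩)

/-- `p` is a monophonic (induced) path: a path with no edge joining vertices at
index distance greater than 1 along the path. -/
def MPath (G : SimpleGraph V) {u v : V} (p : G.Walk u v) : Prop :=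
  p.IsPath ∧ ∀ i j : ℕ, i + 1 < j →
    ∀ (hi : i < p.support.length) (hj : j < p.support.length),
      ¬ G.Adj (p.support.get ⟨i, hi⟩) (p.support.get ⟨j, hj⟩)

/-- `p` is a geodesic (shortest path). -/
def GPath (G : SimpleGraph V) {u v : V} (p : G.Walk u v) : Prop :=
  p.IsPath ∧ ∀ q : G.Walk u v, p.length ≤ q.length

/-- `S` is convex in the triangle path convexity. -/
def TConvex (G : SimpleGraph V) (S : Set V) : Prop :=
  ∀ ⦃u v : V⦄, u ∈ S → v ∈ S → ∀ p : G.Walk u v, TPath G p → ∀ w ∈ p.support, w ∈ S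

/-- `S` is convex in the monophonic convexity. -/
def MConvex (G : SimpleGraph V) (S : Set V) : Prop :=
  ∀ ⦃u v : V⦄, u ∈ S → v ∈ S → ∀ p : G.Walk u v, MPath G p → ∀ w ∈ p.support, w ∈ S

/-- `S` is convex in the geodetic convexity. -/
def GConvex (G : SimpleGraph V) (S : Set V) : Prop :=
  ∀ ⦃u v : V⦄, u ∈ S → v ∈ S → ∀ p : G.Walk u v, GPath G p → ∀ w ∈ p.support, w ∈ S

/-- `S` is `P₃`-convex: no vertex outside `S` has two neighbours in `S`. -/
def P3Convex (G : SimpleGraph V) (S : Set V) : Prop :=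
  ∀ w ∉ S, ∀ a ∈ S, ∀ b ∈ S, G.Adj w a → G.Adj w b → a = b

/-- The triangle path interval of `S`. -/
def TInterval (G : SimpleGraph V) (S : Set V) : Set V :=
  S ∪ {w | ∃ u ∈ S, ∃ v ∈ S, ∃ p : G.Walk u v, TPath G p ∧ w ∈ p.support}

/-- The monophonic interval of `S`. -/
def MInterval (G : SimpleGraph V) (S : Set V) : Set V :=
  S ∪ {w | ∃ u ∈ S, ∃ v ∈ S, ∃ p : G.Walk u v, MPath G p ∧ w ∈ p.support}

/-- The geodetic interval of `S`. -/
def GInterval (G : SimpleGraph V) (S : Set V) : Set V :=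
  S ∪ {w | ∃ u ∈ S, ∃ v ∈ S, ∃ p : G.Walk u v, GPath G p ∧ w ∈ p.support}

/-- The `P₃`-interval of `S`: `S` together with the vertices having at least two
neighbours in `S`. -/
def P3Interval (G : SimpleGraph V) (S : Set V) : Set V :=
  S ∪ {w | w ∉ S ∧ ∃ a ∈ S, ∃ b ∈ S, a ≠ b ∧ G.Adj w a ∧ G.Adj w b}

/-- The convex hull of `S` in the triangle path convexity. -/
def THull (G : SimpleGraph V) (S : Set V) : Set V :=
  ⋂₀ {C : Set V | S ⊆ C ∧ TConvex G C}

/-- The convex hull of `S` in the monophonic convexity. -/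
def MHull (G : SimpleGraph V) (S : Set V) : Set V :=
  ⋂₀ {C : Set V | S ⊆ C ∧ MConvex G C}

/-- The convex hull of `S` in the geodetic convexity. -/
def GHull (G : SimpleGraph V) (S : Set V) : Set V :=
  ⋂₀ {C : Set V | S ⊆ C ∧ GConvex G C}

/-- `K` separates the vertices `a` and `b`: both lie outside `K` and every walk
between them meets `K`. -/
def Separates (G : SimpleGraph V) (K : Set V) (a b : V) : Prop :=
  a ∉ K ∧ b ∉ K ∧ ∀ p : G.Walk a b, ∃ w ∈ p.support, w ∈ K

/-- `K` is a separator of `G`. -/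
def IsSeparator (G : SimpleGraph V) (K : Set V) : Prop :=
  ∃ a b : V, Separates G K a b

/-- `G` is prime: it has no clique separator. -/
def IsPrime (G : SimpleGraph V) : Prop :=
  ¬ ∃ C : Set V, G.IsClique C ∧ IsSeparator G C

/-- `K` is a minimal separator for `a` and `b`. -/
def IsMinSeparator (G : SimpleGraph V) (K : Set V) (a b : V) : Prop :=
  Separates G K a b ∧ ∀ K' : Set V, K' ⊂ K → ¬ Separates G K' a b

/-- `W` induces a maximal prime subgraph of `G`. -/
def IsMPSubgraph (G : SimpleGraph V) (W : Set V) : Prop :=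
  IsPrime (G.induce W) ∧ ∀ W' : Set V, W ⊆ W' → IsPrime (G.induce W') → W' = W

/-- `C` is the vertex set of a connected component of `G - S`. -/
def IsCompOf (G : SimpleGraph V) (S C : Set V) : Prop :=
  C.Nonempty ∧ C ∩ S = ∅ ∧
  (∀ x ∈ C, ∀ y ∈ C, ∃ p : G.Walk x y, ∀ w ∈ p.support, w ∈ C) ∧
  (∀ x ∈ C, ∀ y : V, y ∉ S → G.Adj x y → y ∈ C)


/-!
A set with at most one vertex is t-convex, so no hull set has fewer than two vertices. In a
complete graph every vertex `w` lies on the triangle path `a, w, b`. Otherwise let `H` be the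
hull of two non-adjacent vertices and suppose it misses `v`. The neighbourhood `K ⊆ H` of the
component of `G - H` containing `v` is a clique: two non-adjacent vertices of `K` are joined
through that component by an induced path, a triangle path leaving `H`. As `H` is not a clique,
`K` misses some vertex of `H`, and then `K` is a clique separator.
-/

open SimpleGraph

section

variable {G : SimpleGraph V}

section InducedPaths

variable {u v w : V}

lemma mPath_nil : MPath G (Walk.nil : G.Walk u u) :=
  ⟨.nil, fun i j hij _ hj => by simp at hj; omega⟩

lemma mPath_cons_iff (h : G.Adj u v) (p : G.Walk v w) :
    MPath G (.cons h p) ↔ MPath G p ∧ u ∉ p.support ∧ ∀ x ∈ p.support.tail, ¬ G.Adj u x := by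
  simp only [MPath, Walk.cons_isPath_iff, Walk.support_cons, List.get_eq_getElem]
  constructor
  · rintro ⟨⟨hp, hu⟩, hind⟩
    refine ⟨⟨hp, fun i j hij hi hj => ?_⟩, hu, fun x hx => ?_⟩
    · simpa only [List.getElem_cons_succ] using
        hind (i + 1) (j + 1) (by omega) (by simpa only [List.length_cons, Nat.add_lt_add_iff_right])
          (by simpa only [List.length_cons, Nat.add_lt_add_iff_right])
    · obtain ⟨k, hk, rfl⟩ := List.getElem_of_mem hx
      simp only [List.length_tail] at hk
      simpa only [List.getElem_cons_succ, List.getElem_cons_zero, List.getElem_tail] using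
        hind 0 (k + 2) (by omega) (by simp only [List.length_cons]; omega)
          (by simp only [List.length_cons]; omega)
  · rintro ⟨⟨hp, hind⟩, hu, hadj⟩
    refine ⟨⟨hp, hu⟩, fun i j hij hi hj => ?_⟩
    simp only [List.length_cons] at hi hj
    obtain ⟨j, rfl⟩ : ∃ k, j = k + 1 := ⟨j - 1, by omega⟩
    cases i with
    | zero =>
      obtain ⟨j, rfl⟩ : ∃ k, j = k + 1 := ⟨j - 1, by omega⟩
      have hmem : p.support[j + 1] ∈ p.support.tail := by
        rw [← List.getElem_tail (by simp only [List.length_tail]; omega)]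
        exact List.getElem_mem _
      simpa only [List.getElem_cons_succ, List.getElem_cons_zero] using hadj _ hmem
    | succ i =>
      simpa only [List.getElem_cons_succ] using hind i j (by omega) (by omega) (by omega)

lemma mPath_cons_of_forall_ne_not_adj (h : G.Adj u v) {p : G.Walk v w} (hp : MPath G p)
    (hu : ∀ x ∈ p.support.tail, u ≠ x ∧ ¬ G.Adj u x) : MPath G (.cons h p) := by
  refine (mPath_cons_iff h p).2 ⟨hp, ?_, fun x hx => (hu x hx).2⟩
  rw [← Walk.cons_tail_support, List.mem_cons, not_or]
  exact ⟨h.ne, fun hmem => (hu u hmem).1 rfl⟩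

lemma MPath.exists_extend {p : G.Walk v w} (hp : MPath G p)
    (hu : ∃ x ∈ p.support, u = x ∨ G.Adj u x) :
    ∃ q : G.Walk u w, MPath G q ∧ q.support ⊆ u :: p.support := by
  induction p with
  | nil =>
    simp only [Walk.support_nil, List.mem_singleton, exists_eq_left] at hu
    rcases hu with rfl | hadj
    · exact ⟨.nil, mPath_nil, by simp⟩
    · exact ⟨.cons hadj .nil, mPath_cons_of_forall_ne_not_adj hadj mPath_nil (by simp), by simp⟩
  | @cons v m w h s ih =>
    rw [mPath_cons_iff] at hp
    by_cases hs : ∃ x ∈ s.support, u = x ∨ G.Adj u x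
    · obtain ⟨q, hq, hsub⟩ := ih hp.1 hs
      exact ⟨q, hq, List.Subset.trans hsub (List.cons_subset_cons _ (List.subset_cons_self _ _))⟩
    · push Not at hs
      obtain rfl | hadj : u = v ∨ G.Adj u v := by
        simp only [Walk.support_cons, List.mem_cons, exists_eq_or_imp] at hu
        exact hu.resolve_right fun ⟨x, hx, hux⟩ => hux.elim (hs x hx).1 (hs x hx).2
      · exact ⟨_, (mPath_cons_iff _ _).2 hp, List.subset_cons_self _ _⟩
      · exact ⟨.cons hadj (.cons h s), mPath_cons_of_forall_ne_not_adj hadj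
          ((mPath_cons_iff _ _).2 hp) hs, List.Subset.refl _⟩

lemma SimpleGraph.Walk.exists_mPath_support_subset (p : G.Walk u v) :
    ∃ q : G.Walk u v, MPath G q ∧ q.support ⊆ p.support := by
  induction p with
  | nil => exact ⟨.nil, mPath_nil, List.Subset.refl _⟩
  | cons h p ih =>
    obtain ⟨q, hq, hsub⟩ := ih
    obtain ⟨r, hr, hrsub⟩ := MPath.exists_extend hq ⟨_, q.start_mem_support, .inr h⟩
    exact ⟨r, hr, List.Subset.trans hrsub (List.cons_subset_cons _ hsub)⟩

lemma MPath.tPath {p : G.Walk u v} (hp : MPath G p) : TPath G p :=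
  ⟨hp.1, fun i j hij => hp.2 i j (by omega)⟩

end InducedPaths

section Convexity

variable {S T : Set V} {a b w : V}

lemma subset_tHull (G : SimpleGraph V) (S : Set V) : S ⊆ THull G S :=
  fun _ hx => mem_sInter.2 fun _ hC => hC.1 hx

lemma tConvex_tHull (G : SimpleGraph V) (S : Set V) : TConvex G (THull G S) :=
  fun _ _ hu hv p hp w hw => mem_sInter.2 fun C hC =>
    hC.2 (mem_sInter.1 hu C hC) (mem_sInter.1 hv C hC) p hp w hw

lemma tHull_min (hST : S ⊆ T) (hT : TConvex G T) : THull G S ⊆ T :=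
  sInter_subset_of_mem ⟨hST, hT⟩

lemma tConvex_of_subsingleton (hS : S.Subsingleton) : TConvex G S := by
  intro u v hu hv p hp w hw
  obtain rfl := hS hu hv
  rw [Walk.nil_iff_support_eq.1 (Walk.isPath_iff_nil.1 hp.1), List.mem_singleton] at hw
  exact hw ▸ hu

lemma TConvex.mem_of_adj_of_adj (hS : TConvex G S) (ha : a ∈ S) (hb : b ∈ S) (hab : a ≠ b)
    (haw : G.Adj a w) (hwb : G.Adj w b) : w ∈ S := by
  have hsupp : (Walk.cons haw (.cons hwb .nil)).support = [a, w, b] := rfl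
  refine hS ha hb (.cons haw (.cons hwb .nil)) ⟨?_, fun i j hij _ hj => ?_⟩ w (by simp [hsupp])
  · simp [Walk.isPath_def, hsupp, haw.ne, hwb.ne, hab]
  · simp only [hsupp, List.length_cons, List.length_nil] at hj
    omega

lemma TConvex.eq_univ_of_top (hS : TConvex (⊤ : SimpleGraph V) S) (ha : a ∈ S) (hb : b ∈ S)
    (hab : a ≠ b) : S = univ := by
  refine eq_univ_of_forall fun w => ?_
  by_cases hwa : w = a
  · exact hwa ▸ ha
  by_cases hwb : w = b
  · exact hwb ▸ hb
  exact hS.mem_of_adj_of_adj ha hb hab ((top_adj _ _).2 (Ne.symm hwa)) ((top_adj _ _).2 hwb)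

end Convexity

section Components

variable {S C : Set V} {s t v : V}

def outerBoundary (G : SimpleGraph V) (C : Set V) : Set V :=
  {x | x ∉ C ∧ ∃ c ∈ C, G.Adj c x}

lemma SimpleGraph.Walk.exists_mem_outerBoundary (p : G.Walk s t) (hs : s ∈ C) (ht : t ∉ C) :
    ∃ x ∈ p.support, x ∈ outerBoundary G C := by
  induction p with
  | nil => exact absurd hs ht
  | @cons s m t h p ih =>
    by_cases hm : m ∈ C
    · obtain ⟨x, hx, hxC⟩ := ih hm ht
      exact ⟨x, List.mem_cons_of_mem _ hx, hxC⟩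
    · exact ⟨m, by simp, hm, s, hs, h⟩

lemma separates_outerBoundary (hs : s ∈ C) (ht : t ∉ C) (ht' : t ∉ outerBoundary G C) :
    Separates G (outerBoundary G C) s t :=
  ⟨fun h => h.1 hs, ht', fun p => p.exists_mem_outerBoundary hs ht⟩

lemma exists_isCompOf (hv : v ∉ S) : ∃ C, IsCompOf G S C ∧ v ∈ C := by
  classical
  set C := {x | ∃ p : G.Walk v x, ∀ z ∈ p.support, z ∉ S}
  have hwalk : ∀ x ∈ C, ∃ p : G.Walk v x, ∀ z ∈ p.support, z ∈ C := by
    rintro x ⟨p, hp⟩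
    exact ⟨p, fun z hz => ⟨p.takeUntil z hz,
      fun y hy => hp y (p.support_takeUntil_subset_support hz hy)⟩⟩
  refine ⟨C, ⟨⟨v, .nil, by simpa using hv⟩, ?_, fun x hx y hy => ?_, ?_⟩, .nil, by simpa using hv⟩
  · exact eq_empty_of_forall_notMem fun x ⟨⟨p, hp⟩, hxS⟩ => hp x p.end_mem_support hxS
  · obtain ⟨p, hp⟩ := hwalk x hx
    obtain ⟨q, hq⟩ := hwalk y hy
    refine ⟨p.reverse.append q, fun z hz => ?_⟩
    rw [Walk.mem_support_append_iff, Walk.support_reverse, List.mem_reverse] at hz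
    exact hz.elim (hp z) (hq z)
  · rintro x ⟨p, hp⟩ y hy hxy
    refine ⟨p.concat hxy, fun z hz => ?_⟩
    rw [Walk.support_concat, List.mem_append, List.mem_singleton] at hz
    exact hz.elim (hp z) (· ▸ hy)

lemma IsCompOf.outerBoundary_subset (hC : IsCompOf G S C) : outerBoundary G C ⊆ S :=
  fun x ⟨hxC, c, hc, hcx⟩ => by_contra fun hxS => hxC (hC.2.2.2 c hc x hxS hcx)

lemma IsCompOf.isClique_outerBoundary (hS : TConvex G S) (hC : IsCompOf G S C) :
    G.IsClique (outerBoundary G C) := by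
  rintro x hx y hy hxy
  by_contra hnadj
  obtain ⟨c, hc, hcx⟩ := hx.2
  obtain ⟨d, hd, hdy⟩ := hy.2
  obtain ⟨p, hp⟩ := hC.2.2.1 c hc d hd
  obtain ⟨q, hq, hqsub⟩ := (Walk.cons hcx.symm (p.concat hdy)).exists_mPath_support_subset
  have hqS := hS (hC.outerBoundary_subset hx) (hC.outerBoundary_subset hy) q hq.tPath
  have hqxy : ∀ z ∈ q.support, z = x ∨ z = y := by
    intro z hz
    have hz' := hqsub hz
    rw [Walk.support_cons, Walk.support_concat, List.mem_cons,
      List.mem_append, List.mem_singleton] at hz'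
    rcases hz' with rfl | hzp | rfl
    · exact .inl rfl
    · exact absurd ⟨hp z hzp, hqS z hz⟩ (eq_empty_iff_forall_notMem.1 hC.2.1 z)
    · exact .inr rfl
  cases q with
  | nil => exact hxy rfl
  | cons h r =>
    rcases hqxy _ (List.mem_cons_of_mem _ r.start_mem_support) with rfl | rfl
    · exact G.irrefl h
    · exact hnadj h

end Components

theorem TConvex.eq_univ_of_not_isClique {S : Set V} (hprime : IsPrime G) (hS : TConvex G S)
    (hS' : ¬ G.IsClique S) : S = univ := by
  by_contra hne
  obtain ⟨v, hv⟩ := (ne_univ_iff_exists_notMem S).1 hne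
  obtain ⟨C, hC, hvC⟩ := exists_isCompOf (G := G) hv
  have hK := hC.isClique_outerBoundary hS
  obtain ⟨t, htS, htK⟩ : ∃ t ∈ S, t ∉ outerBoundary G C :=
    not_subset.1 fun h => hS' (hK.subset h)
  have htC : t ∉ C := fun htC => eq_empty_iff_forall_notMem.1 hC.2.1 t ⟨htC, htS⟩
  exact hprime ⟨_, hK, v, t, separates_outerBoundary hvC htC htK⟩

lemma exists_pair_tHull_eq_univ [Nontrivial V] (hprime : IsPrime G) :
    ∃ a b : V, a ≠ b ∧ THull G {a, b} = univ := by
  have ha a b : a ∈ THull G {a, b} := subset_tHull G _ (mem_insert a _)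
  have hb a b : b ∈ THull G {a, b} := subset_tHull G _ (mem_insert_of_mem a rfl)
  by_cases hG : G = ⊤
  · subst hG
    obtain ⟨a, b, hab⟩ := exists_pair_ne V
    exact ⟨a, b, hab, TConvex.eq_univ_of_top (tConvex_tHull _ _) (ha a b) (hb a b) hab⟩
  · obtain ⟨a, b, hab, hnadj⟩ : ∃ a b, a ≠ b ∧ ¬ G.Adj a b := by
      contrapose! hG
      ext a b
      exact ⟨Adj.ne, hG a b⟩
    exact ⟨a, b, hab, TConvex.eq_univ_of_not_isClique hprime (tConvex_tHull G _)
      fun h => hnadj (h (ha a b) (hb a b) hab)⟩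

end

theorem stmt_12_general [Fintype V] (G : SimpleGraph V)
    (hprime : IsPrime G) (hcard : 2 ≤ Fintype.card V) :
    IsLeast {n : ℕ | ∃ S : Set V, S.ncard = n ∧ THull G S = Set.univ} 2 := by
  have : Nontrivial V := Fintype.one_lt_card_iff_nontrivial.1 hcard
  refine ⟨?_, fun n ⟨S, hSn, hS⟩ => ?_⟩
  · obtain ⟨a, b, hab, hhull⟩ := exists_pair_tHull_eq_univ hprime
    exact ⟨{a, b}, ncard_pair hab, hhull⟩
  · by_contra! hn
    have hsub : S.Subsingleton := ncard_le_one_iff_subsingleton.1 (by omega)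
    have hSuniv : univ ⊆ S := hS ▸ tHull_min subset_rfl (tConvex_of_subsingleton hsub)
    exact not_subsingleton V (subsingleton_univ_iff.1 (hsub.anti hSuniv))

theorem stmt_12 [Fintype V] (G : SimpleGraph V) (hconn : G.Connected)
    (hprime : IsPrime G) (hcard : 2 ≤ Fintype.card V) :
    IsLeast {n : ℕ | ∃ S : Set V, S.ncard = n ∧ THull G S = Set.univ} 2 :=
  stmt_12_general G hprime hcard
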